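/- Let G be a finite group, g ∈ G, and let N = ⋂_{χ ∈ Irr(G), χ(g)=χ(1)} ker χ. Then K_g = N°, where K_g = {h ∈ G : E_h = E_g} with E_x = {χ ∈ Irr(G) : χ(x) ≠ χ(1)}, and N° = N \ ⋃{M : M normal in G, M < N} M. -/

import Mathlib

/-- `χ : G → ℂ` is an irreducible character: the character of a simple
finite-dimensional complex representation of `G`. -/
def IsIrrChar (G : Type) [Monoid G] (χ : G → ℂ) : Prop :=
  ∃ V : FDRep ℂ G, CategoryTheory.Simple V ∧ V.character = χ

/-- `E_g = {χ ∈ Irr(G) : χ(g) ≠ χ(1)}`. -/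
def Eset (G : Type) [Monoid G] (g : G) : Set (G → ℂ) :=
  {χ : G → ℂ | IsIrrChar G χ ∧ χ g ≠ χ 1}

/-- `K_g = {h ∈ G : E_h = E_g}`. -/
def Kset (G : Type) [Monoid G] (g : G) : Set G :=
  {h : G | Eset G h = Eset G g}

/-!
The intersection `N` of the kernels of the irreducible characters containing `g` is the normal
closure of `g`: for a normal subgroup `M` and `x ∉ M`, some irreducible constituent of the
permutation representation on `G ⧸ M`, whose kernel is `M`, does not contain `x` in its kernel.
Hence `E_h = E_g` exactly when `h` and `g` have the same normal closure, i.e. when `h` lies in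
`N` but in no normal subgroup strictly below `N`.

Kernels of characters are kernels of representations: `χ(x) = χ(1)` forces `ρ(x) = 1`, since
`ρ(x)` is diagonalisable with roots of unity as eigenvalues, and `χ(1)` complex numbers of modulus
at most one sum to `χ(1)` only if all of them are `1`.
-/

open CategoryTheory Polynomial Subgroup
open scoped MonoidAlgebra ComplexOrder

universe u

theorem Multiset.eq_one_of_norm_le_one_of_sum_eq_card {s : Multiset ℂ}
    (hs : ∀ z ∈ s, ‖z‖ ≤ 1) (hsum : s.sum = Multiset.card s) : ∀ z ∈ s, z = 1 := by
  have hre : ∀ z ∈ s, 0 ≤ 1 - z.re := fun z hz =>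
    sub_nonneg.2 ((Complex.re_le_norm z).trans (hs z hz))
  have hre_sum : (s.map Complex.re).sum = Multiset.card s := by
    simpa using map_multiset_sum Complex.reAddGroupHom s ▸ congrArg Complex.reAddGroupHom hsum
  have hzero : (s.map fun z => 1 - z.re).sum = 0 := by
    simp [Multiset.sum_map_sub, hre_sum]
  intro z hz
  have hle := Multiset.single_le_sum (s := s.map fun z => 1 - z.re)
    (by simpa using hre) _ (Multiset.mem_map_of_mem _ hz)
  have h1 : z.re = ‖z‖ := le_antisymm (Complex.re_le_norm z) (by linarith [hs z hz])
  obtain ⟨-, him⟩ := Complex.nonneg_iff.1 (Complex.re_eq_norm.1 h1)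
  apply Complex.ext <;> simp <;> linarith [hs z hz]

namespace Module.End

variable {K V : Type*} [Field K] [AddCommGroup V] [Module K V] [FiniteDimensional K V]

theorem pow_eq_one_of_mem_roots_charpoly {f : End K V} {n : ℕ} (hf : f ^ n = 1) {μ : K}
    (hμ : μ ∈ f.charpoly.roots) : μ ^ n = 1 := by
  have hroot : (minpoly K f).IsRoot μ := hasEigenvalue_iff_isRoot.1
    ((hasEigenvalue_iff_isRoot_charpoly f μ).2 (isRoot_of_mem_roots hμ))
  have hdvd : minpoly K f ∣ X ^ n - 1 := minpoly.dvd K f (by simp [hf])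
  simpa [sub_eq_zero] using hroot.dvd hdvd

theorem charpoly_eq_X_sub_one_pow {f : End K V} (hsplit : f.charpoly.Splits)
    (h : ∀ μ ∈ f.charpoly.roots, μ = 1) : f.charpoly = (X - 1) ^ finrank K V := by
  rw [hsplit.eq_prod_roots_of_monic f.charpoly_monic, Multiset.eq_replicate_of_mem h]
  simp [← f.charpoly_natDegree, splits_iff_card_roots.1 hsplit]

theorem eq_one_of_isSemisimple_of_roots_charpoly {f : End K V} (hs : f.IsSemisimple)
    (hsplit : f.charpoly.Splits) (h : ∀ μ ∈ f.charpoly.roots, μ = 1) : f = 1 := by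
  have hnil : IsNilpotent (f - 1) := ⟨finrank K V, by
    simpa [charpoly_eq_X_sub_one_pow hsplit h] using LinearMap.aeval_self_charpoly f⟩
  have hs' : (f - 1).IsSemisimple := by
    simpa using (isSemisimple_sub_algebraMap_iff (μ := (1 : K))).2 hs
  exact sub_eq_zero.1 (eq_zero_of_isNilpotent_isSemisimple hnil hs')

theorem eq_one_of_pow_eq_one_of_trace_eq_finrank {V : Type*} [AddCommGroup V] [Module ℂ V]
    [FiniteDimensional ℂ V] {f : End ℂ V} {n : ℕ} (hn : n ≠ 0) (hf : f ^ n = 1)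
    (htr : LinearMap.trace ℂ V f = finrank ℂ V) : f = 1 := by
  have hsplit := IsAlgClosed.splits f.charpoly
  have hs : f.IsSemisimple := isSemisimple_of_squarefree_aeval_eq_zero
    (separable_X_pow_sub_C (1 : ℂ) (Nat.cast_ne_zero.2 hn) one_ne_zero).squarefree (by simp [hf])
  refine eq_one_of_isSemisimple_of_roots_charpoly hs hsplit
    (Multiset.eq_one_of_norm_le_one_of_sum_eq_card (fun μ hμ =>
      (Complex.norm_eq_one_of_pow_eq_one (pow_eq_one_of_mem_roots_charpoly hf hμ) hn).le) ?_)
  rw [← trace_eq_sum_roots_charpoly_of_splits hsplit, htr, ← f.charpoly_natDegree,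
    splits_iff_card_roots.1 hsplit]

end Module.End

theorem FDRep.character_eq_character_one_iff {G : Type} [Group G] [Finite G] (V : FDRep ℂ G)
    (x : G) : V.character x = V.character 1 ↔ x ∈ V.ρ.ker := by
  rw [MonoidHom.mem_ker]
  refine ⟨fun h => Module.End.eq_one_of_pow_eq_one_of_trace_eq_finrank (orderOf_pos x).ne'
    (by rw [← map_pow, pow_orderOf_eq_one, map_one]) (by rw [← FDRep.char_one]; exact h),
    fun h => ?_⟩
  simp [FDRep.character, h]

namespace Representation

section Monoid

variable {k G : Type u} [Field k] [Monoid G]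

theorem simple_of_isSimpleModule_asModule {V : Type u} [AddCommGroup V] [Module k V]
    [Module.Finite k V] (ρ : Representation k G V) [IsSimpleModule k[G] ρ.asModule] :
    Simple (FDRep.of ρ) :=
  have : Simple ((forget₂ (FDRep k G) (Rep k G) ⋙ Rep.toModuleMonoidAlgebra).obj (FDRep.of ρ)) :=
    simple_iff_isSimpleModule.2 ‹_›
  Functor.simple_of_simple_obj (forget₂ (FDRep k G) (Rep k G) ⋙ Rep.toModuleMonoidAlgebra) _

variable {M : Type*} [AddCommGroup M] [Module k M] [Module k[G] M] [IsScalarTower k k[G] M]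

theorem ofModule'_apply (g : G) (v : M) :
    ofModule' (k := k) (G := G) M g v = MonoidAlgebra.of k G g • v := by
  simp [ofModule']

noncomputable def ofModule'AsModuleEquiv :
    M ≃ₗ[k[G]] (ofModule' (k := k) (G := G) M).asModule where
  toFun v := v
  invFun v := v
  map_add' _ _ := rfl
  map_smul' r v := by
    show _ = asAlgebraHom (ofModule' (k := k) (G := G) M) r v
    simp [asAlgebraHom_def, ofModule']
  left_inv _ := rfl
  right_inv _ := rfl

end Monoid

variable {k G : Type u} [Field k] [Group G]

theorem ker_ofMulAction_quotient (N : Subgroup G) [N.Normal] :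
    (ofMulAction k G (G ⧸ N)).ker = N := by
  ext g
  rw [MonoidHom.mem_ker]
  constructor
  · intro h
    have := congr($h (MonoidAlgebra.single (1 : G ⧸ N) (1 : k)))
    rwa [ofMulAction_single, Module.End.one_apply, MonoidAlgebra.single_left_inj one_ne_zero,
      ← QuotientGroup.mk_one, MulAction.Quotient.smul_mk, smul_eq_mul, mul_one,
      QuotientGroup.mk_one, QuotientGroup.eq_one_iff] at this
  · intro hg
    ext q
    induction q using QuotientGroup.induction_on with
    | H h => simp [(QuotientGroup.eq_one_iff g).2 hg]

variable [Finite G] [NeZero (Nat.card G : k)]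

/-- By Maschke's theorem `ρ` is the sum of its simple subrepresentations, so `x` acts
nontrivially on one of them. -/
theorem exists_simple_ker_le_ker_of_notMem_ker {V : Type u} [AddCommGroup V] [Module k V]
    [Module.Finite k V] (ρ : Representation k G V) {x : G} (hx : x ∉ ρ.ker) :
    ∃ W : FDRep k G, Simple W ∧ ρ.ker ≤ W.ρ.ker ∧ x ∉ W.ρ.ker := by
  by_contra! h
  have fixes (p : Submodule k[G] ρ.asModule) (hp : IsSimpleModule k[G] p) :
      ∀ v ∈ p, MonoidAlgebra.of k G x • v = v := by
    have : Module.Finite k p := inferInstanceAs (Module.Finite k (p.restrictScalars k))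
    have : IsSimpleModule k[G] (ofModule' (k := k) (G := G) p).asModule :=
      IsSimpleModule.congr ofModule'AsModuleEquiv.symm
    have hker : ρ.ker ≤ (FDRep.of (ofModule' (k := k) (G := G) p)).ρ.ker := fun m hm => by
      ext w
      simp [ofModule'_apply, MonoidHom.mem_ker.1 hm]
      rfl
    intro v hv
    have := congr($(h _ (simple_of_isSimpleModule_asModule _) hker) ⟨v, hv⟩)
    simpa [ofModule'_apply] using congrArg Subtype.val this
  have hall (v : ρ.asModule) : MonoidAlgebra.of k G x • v = v := by
    have hv : v ∈ sSup {p : Submodule k[G] ρ.asModule | IsSimpleModule k[G] p} := by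
      rw [IsSemisimpleModule.sSup_simples_eq_top]
      trivial
    rw [sSup_eq_iSup'] at hv
    exact Submodule.iSup_induction _ (motive := fun v => MonoidAlgebra.of k G x • v = v) hv
      (fun p => fixes p p.2) (smul_zero _) (fun a b ha hb => by rw [smul_add, ha, hb])
  exact hx (MonoidHom.mem_ker.2 (LinearMap.ext fun v => ρ.asModuleEquiv.symm.injective
    (by rw [asModuleEquiv_symm_map_rho, hall, Module.End.one_apply])))

theorem exists_simple_le_ker_of_notMem (N : Subgroup G) [N.Normal] {x : G} (hx : x ∉ N) :
    ∃ W : FDRep k G, Simple W ∧ N ≤ W.ρ.ker ∧ x ∉ W.ρ.ker := by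
  rw [← ker_ofMulAction_quotient (k := k) N] at hx ⊢
  exact exists_simple_ker_le_ker_of_notMem_ker _ hx

end Representation

theorem Subgroup.setOf_normalClosure_eq {G : Type*} [Group G] (g : G) :
    {h : G | normalClosure {h} = normalClosure {g}} =
      (normalClosure {g} : Set G) \
        ⋃ M ∈ {M : Subgroup G | M.Normal ∧ M < normalClosure {g}}, (M : Set G) := by
  ext h
  simp only [Set.mem_ofPred_eq, Set.mem_sdiff, Set.mem_iUnion, SetLike.mem_coe, not_exists,
    and_imp]
  constructor
  · rintro hgh
    refine ⟨hgh ▸ subset_normalClosure rfl, fun M hM hlt hhM => ?_⟩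
    exact hlt.not_ge (hgh ▸ normalClosure_le_normal (Set.singleton_subset_iff.2 hhM))
  · rintro ⟨hh, hmin⟩
    refine (normalClosure_le_normal (Set.singleton_subset_iff.2 hh)).eq_of_not_lt fun hlt => ?_
    exact hmin _ normalClosure_normal hlt (subset_normalClosure rfl)

section Characters

variable {G : Type} [Group G] [Finite G]

theorem FDRep.character_eq_character_one_iff_normalClosure_le (V : FDRep ℂ G) (x : G) :
    V.character x = V.character 1 ↔ normalClosure {x} ≤ V.ρ.ker := by
  rw [V.character_eq_character_one_iff, ← normalClosure_subset_iff, Set.singleton_subset_iff,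
    SetLike.mem_coe]

theorem biInter_isIrrChar_eq_normalClosure (g : G) :
    ⋂ χ ∈ {χ : G → ℂ | IsIrrChar G χ ∧ χ g = χ 1}, {h : G | χ h = χ 1} =
      (normalClosure {g} : Set G) := by
  have : NeZero (Nat.card G : ℂ) := ⟨Nat.cast_ne_zero.2 Nat.card_pos.ne'⟩
  ext h
  simp only [Set.mem_iInter, Set.mem_ofPred_eq, and_imp, SetLike.mem_coe]
  constructor
  · intro H
    by_contra hh
    obtain ⟨W, hW, hle, hx⟩ := Representation.exists_simple_le_ker_of_notMem (k := ℂ) _ hh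
    exact hx ((W.character_eq_character_one_iff h).1 (H _ ⟨W, hW, rfl⟩
      ((W.character_eq_character_one_iff_normalClosure_le g).2 hle)))
  · rintro hh χ ⟨V, hV, rfl⟩ hg
    exact (V.character_eq_character_one_iff_normalClosure_le h).2
      (normalClosure_le_normal (Set.singleton_subset_iff.2 hh) |>.trans
        ((V.character_eq_character_one_iff_normalClosure_le g).1 hg))

theorem eset_eq_eset_iff {g h : G} :
    Eset G h = Eset G g ↔ normalClosure {h} = normalClosure {g} := by
  have hcompl : Eset G h = Eset G g ↔
      {χ : G → ℂ | IsIrrChar G χ ∧ χ h = χ 1} = {χ | IsIrrChar G χ ∧ χ g = χ 1} := by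
    simp only [Eset, Set.ext_iff, Set.mem_ofPred_eq]
    refine forall_congr' fun χ => ?_
    by_cases hχ : IsIrrChar G χ <;> simp [hχ, not_iff_not]
  rw [hcompl]
  constructor
  · intro H
    apply SetLike.coe_injective
    rw [← biInter_isIrrChar_eq_normalClosure, ← biInter_isIrrChar_eq_normalClosure, H]
  · intro H
    ext χ
    refine and_congr_right ?_
    rintro ⟨V, -, rfl⟩
    rw [V.character_eq_character_one_iff_normalClosure_le,
      V.character_eq_character_one_iff_normalClosure_le, H]

end Characters

/-- if `N = ⋂_{χ ∈ Irr(G), χ(g)=χ(1)} ker χ`, then `K_g = N°`, where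
`N°` is `N` minus the union of all proper normal subgroups of `G` contained in `N`. -/
theorem Kset_eq_circ {G : Type} [Group G] [Fintype G] (g : G) (N : Subgroup G)
    (hN : (N : Set G) =
      ⋂ χ ∈ {χ : G → ℂ | IsIrrChar G χ ∧ χ g = χ 1}, {h : G | χ h = χ 1}) :
    Kset G g =
      (N : Set G) \
        ⋃ M ∈ {M : Subgroup G | M.Normal ∧ M < N}, (M : Set G) := by
  obtain rfl : N = normalClosure {g} :=
    SetLike.coe_injective (hN.trans (biInter_isIrrChar_eq_normalClosure g))
  rw [← setOf_normalClosure_eq]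
  ext h
  exact eset_eq_eset_iff
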